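/- arXiv:2402.02059 — 2 statements merged into one kernel-verified Lean document; each statement's English description precedes it below -/
import Mathlib

section
/- Let H(n_1,...,n_M) = Σ_i h_i(n_i) where each h_i is nondecreasing, and let G(c_1,...,c_M) = H(c_1 n, ..., c_M n). Suppose (n*_1,...,n*_M) maximizes H over integer vectors with Σ n_i = Kn and 0 ≤ n_i ≤ n; suppose (ĉ_1,...,ĉ_M) maximizes G over the simplex-slice D = {c ∈ [0,1]^M : Σ c_i = K}; and suppose (ň_1,...,ň_M) maximizes H over integer vectors in the constraint set with ⌊ĉ_i n⌋ ≤ n_i ≤ ⌈ĉ_i n⌉ and Σ n_i = Kn. If G is differentiable on D with gradient norm bounded by Q, then |H(n*) − H(ň)| ≤ Q ‖ĉ − č‖, where č_i = ň_i/n. -/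
open MeasureTheory

/-- Approximation bound for the decoupled sample-allocation problem: the cost of the
floor/ceil rounding approximation is at most `Q ‖ĉ − č‖`. -/
theorem approximation_cost_bound
    {M : ℕ} (hM : 0 < M) (K n : ℕ) (hK : 0 < K) (hn : 0 < n) (hKM : K ≤ M)
    (h : Fin M → ℕ → ℝ) (hmono : ∀ i, Monotone (h i))
    (H : (Fin M → ℕ) → ℝ) (hH : ∀ v, H v = ∑ i, h i (v i))
    (G : EuclideanSpace ℝ (Fin M) → ℝ)
    (D : Set (EuclideanSpace ℝ (Fin M)))
    (hD : D = {c : EuclideanSpace ℝ (Fin M) |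
      (∀ i, c i ∈ Set.Icc (0 : ℝ) 1) ∧ ∑ i, c i = K})
    (hGH : ∀ v : Fin M → ℕ, (∀ i, v i ≤ n) →
      G ((WithLp.equiv 2 (Fin M → ℝ)).symm (fun i => (v i : ℝ) / n)) = H v)
    (G' : EuclideanSpace ℝ (Fin M) → (EuclideanSpace ℝ (Fin M) →L[ℝ] ℝ))
    (Q : ℝ)
    (hdiff : ∀ c ∈ D, HasFDerivWithinAt G (G' c) D c)
    (hQ : ∀ c ∈ D, ‖G' c‖ ≤ Q)
    -- optimizer of the integer problem P1
    (nstar : Fin M → ℕ) (hnstar_le : ∀ i, nstar i ≤ n)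
    (hnstar_sum : ∑ i, nstar i = K * n)
    (hnstar_opt : ∀ v : Fin M → ℕ, (∀ i, v i ≤ n) → ∑ i, v i = K * n →
      H v ≤ H nstar)
    -- optimizer of the continuous problem P2
    (chat : EuclideanSpace ℝ (Fin M)) (hchat_mem : chat ∈ D)
    (hchat_opt : ∀ c ∈ D, G c ≤ G chat)
    -- optimizer of the rounded integer problem P3
    (ncheck : Fin M → ℕ)
    (hncheck_lb : ∀ i, ⌊chat i * n⌋ ≤ (ncheck i : ℤ))
    (hncheck_ub : ∀ i, (ncheck i : ℤ) ≤ ⌈chat i * n⌉)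
    (hncheck_sum : ∑ i, ncheck i = K * n)
    (hncheck_opt : ∀ v : Fin M → ℕ,
      (∀ i, ⌊chat i * n⌋ ≤ (v i : ℤ) ∧ (v i : ℤ) ≤ ⌈chat i * n⌉) →
      ∑ i, v i = K * n → H v ≤ H ncheck) :
    |H nstar - H ncheck|
      ≤ Q * ‖chat - (WithLp.equiv 2 (Fin M → ℝ)).symm (fun i => (ncheck i : ℝ) / n)‖ := by

  have hn' : (0:ℝ) < n := by exact_mod_cast hn
  have hchat := hD ▸ hchat_mem
  obtain ⟨hchat_box, hchat_sum⟩ := hchat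
  -- ncheck is bounded by n
  have hncheck_le : ∀ i, ncheck i ≤ n := by
    intro i
    have h1 : chat i ≤ 1 := (hchat_box i).2
    have h2 : (ncheck i : ℤ) ≤ (n : ℤ) := by
      refine (hncheck_ub i).trans (Int.ceil_le.mpr ?_)
      push_cast
      nlinarith
    exact_mod_cast h2
  set cv : EuclideanSpace ℝ (Fin M) :=
    (WithLp.equiv 2 (Fin M → ℝ)).symm (fun i => (ncheck i : ℝ) / n) with hcv
  set sv : EuclideanSpace ℝ (Fin M) :=
    (WithLp.equiv 2 (Fin M → ℝ)).symm (fun i => (nstar i : ℝ) / n) with hsv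
  have hmemD : ∀ (v : Fin M → ℕ), (∀ i, v i ≤ n) → (∑ i, v i = K * n) →
      (WithLp.equiv 2 (Fin M → ℝ)).symm (fun i => (v i : ℝ) / n) ∈ D := by
    intro v hvle hvsum
    rw [hD]
    simp only [Set.mem_setOf_eq, WithLp.equiv_symm_apply, PiLp.toLp_apply, Set.mem_Icc]
    constructor
    · intro i
      constructor
      · positivity
      · rw [div_le_one hn']
        exact_mod_cast hvle i
    · rw [← Finset.sum_div]
      rw [show (∑ i, ((v i : ℝ))) = ((K * n : ℕ) : ℝ) by push_cast; exact_mod_cast congrArg (Nat.cast : ℕ → ℝ) hvsum]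
      push_cast
      field_simp
  have hcvD : cv ∈ D := hmemD ncheck hncheck_le hncheck_sum
  have hsvD : sv ∈ D := hmemD nstar hnstar_le hnstar_sum
  have hGcv : G cv = H ncheck := hGH ncheck hncheck_le
  have hGsv : G sv = H nstar := hGH nstar hnstar_le
  -- convexity of D
  have hconv : Convex ℝ D := by
    rw [hD]
    intro c hc d hd a b ha hb hab
    obtain ⟨hcb, hcs⟩ := hc
    obtain ⟨hdb, hds⟩ := hd
    constructor
    · intro i
      have happ : (a • c + b • d) i = a * c i + b * d i := rfl
      rw [happ]
      constructor
      · have := (hcb i).1; have := (hdb i).1; positivity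
      · have h1 := (hcb i).2; have h2 := (hdb i).2
        nlinarith
    · have happ : ∀ i, (a • c + b • d) i = a * c i + b * d i := fun i => rfl
      simp only [happ]
      rw [Finset.sum_add_distrib, ← Finset.mul_sum, ← Finset.mul_sum, hcs, hds]
      nlinarith
  have hle : H ncheck ≤ H nstar := hnstar_opt ncheck hncheck_le hncheck_sum
  have hub : H nstar ≤ G chat := hGsv ▸ hchat_opt sv hsvD
  have hmvt : ‖G chat - G cv‖ ≤ Q * ‖chat - cv‖ :=
    hconv.norm_image_sub_le_of_norm_hasFDerivWithin_le hdiff hQ hcvD hchat_mem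
  rw [abs_of_nonneg (by linarith)]
  calc H nstar - H ncheck ≤ G chat - G cv := by rw [hGcv]; linarith
    _ ≤ ‖G chat - G cv‖ := le_abs_self _
    _ ≤ Q * ‖chat - cv‖ := hmvt
end

section
/- For uniform distributions U[a_i, b_i] with 0 < a_i < b_i, the maximizer over the set {c ∈ ℝ^M : Σ c_i = K, c_i > 0} of the function Σ_{i=1}^M (b_i − (b_i − a_i)/(c_i n + 1)) is given by ĉ_i = (√(b_i − a_i) / ((Σ_j √(b_j − a_j))/M)) (K/M + 1/n) − 1/n, provided all these ĉ_i are positive. -/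
/-!
Write `d i = b i - a i` and `w i = c i * n + 1`; the objective is `∑ b i - ∑ d i / w i`, and the
constraint fixes `∑ w i = K * n + M`. By the Cauchy–Schwarz inequality in Engel form,
`∑ d i / w i ≥ (∑ √(d i))² / ∑ w i`, with equality when `w` is proportional to `√d`.
The Lagrange point `ĉ` is exactly the one with
`ĉ i * n + 1 = √(d i) * (K * n + M) / ∑ j √(d j)`.
-/

open Finset

theorem Finset.sum_div_le_sum_div_of_eq_mul_sqrt {ι : Type*} {s : Finset ι} {d v w : ι → ℝ}
    {t : ℝ} (hd : ∀ i ∈ s, 0 ≤ d i) (hv : ∀ i ∈ s, v i = t * √(d i))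
    (hw : ∀ i ∈ s, 0 < w i) (hvw : ∑ i ∈ s, v i = ∑ i ∈ s, w i) :
    ∑ i ∈ s, d i / v i ≤ ∑ i ∈ s, d i / w i := by
  set S := ∑ i ∈ s, √(d i)
  have hsum_v : ∑ i ∈ s, v i = t * S := by rw [Finset.mul_sum]; exact sum_congr rfl hv
  have hsum_dv : ∑ i ∈ s, d i / v i = S / t := by
    rw [sum_div]
    refine sum_congr rfl fun i hi => ?_
    rw [hv i hi, div_mul_eq_div_div_swap, Real.div_sqrt]
  have hS : S / t = S ^ 2 / ∑ i ∈ s, w i := by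
    rcases eq_or_ne S 0 with hS | hS
    · simp [hS]
    · rw [← hvw, hsum_v, sq, mul_comm t, mul_div_mul_left _ _ hS]
  calc ∑ i ∈ s, d i / v i = S ^ 2 / ∑ i ∈ s, w i := hsum_dv.trans hS
    _ ≤ ∑ i ∈ s, √(d i) ^ 2 / w i := sq_sum_div_le_sum_sq_div s _ hw
    _ = ∑ i ∈ s, d i / w i := sum_congr rfl fun i hi => by rw [Real.sq_sqrt (hd i hi)]

theorem lagrange_point_mul_add_one {K n M S : ℝ} (x : ℝ) (hn : n ≠ 0) (hM : M ≠ 0)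
    (hS : S ≠ 0) :
    (x / (S / M) * (K / M + 1 / n) - 1 / n) * n + 1 = (K * n + M) / S * x := by
  field_simp
  ring

theorem uniform_lagrange_maximizer_general
    {M : ℕ} (hM : 0 < M) (K n : ℕ) (hn : 0 < n)
    (a b : Fin M → ℝ) (hab : ∀ i, a i < b i)
    (chat : Fin M → ℝ)
    (hchat : ∀ i, chat i =
      Real.sqrt (b i - a i) / ((∑ j, Real.sqrt (b j - a j)) / M) * (K / M + 1 / n) - 1 / n) :
    (∑ i, chat i = K) ∧
    ∀ c : Fin M → ℝ, (∀ i, 0 < c i) → ∑ i, c i = K →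
      ∑ i, (b i - (b i - a i) / (c i * n + 1))
        ≤ ∑ i, (b i - (b i - a i) / (chat i * n + 1)) := by
  have hd : ∀ i, 0 < b i - a i := fun i => sub_pos.2 (hab i)
  set S := ∑ j, √(b j - a j)
  have hS : 0 < S :=
    sum_pos (fun i _ => Real.sqrt_pos.2 (hd i)) (univ_nonempty_iff.2 ⟨⟨0, hM⟩⟩)
  have hn' : (0 : ℝ) < n := Nat.cast_pos.2 hn
  have hchat_weight : ∀ i, chat i * n + 1 = (K * n + M) / S * √(b i - a i) := fun i => by
    rw [hchat i, lagrange_point_mul_add_one _ hn'.ne' (Nat.cast_pos.2 hM).ne' hS.ne']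
  have hweight_sum (c : Fin M → ℝ) (hc : ∑ i, c i = K) :
      ∑ i, (c i * n + 1) = K * n + M := by
    simp [sum_add_distrib, ← sum_mul, hc]
  have hchat_sum : ∑ i, chat i = K := by
    have h : ∑ i, (chat i * n + 1) = K * n + M := by
      rw [sum_congr rfl fun i _ => hchat_weight i, ← mul_sum, div_mul_cancel₀ _ hS.ne']
    simp only [sum_add_distrib, ← sum_mul, sum_const, card_univ, Fintype.card_fin,
      nsmul_eq_mul, mul_one, add_left_inj] at h
    exact mul_right_cancel₀ hn'.ne' h
  refine ⟨hchat_sum, fun c hc hc_sum => ?_⟩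
  simp only [sum_sub_distrib]
  refine sub_le_sub_left (sum_div_le_sum_div_of_eq_mul_sqrt (fun i _ => (hd i).le)
    (fun i _ => hchat_weight i) (fun i _ => by have := hc i; positivity) ?_) _
  rw [hweight_sum c hc_sum, hweight_sum chat hchat_sum]

/-- For uniform distributions `U[a_i, b_i]`, the Lagrange-multiplier values `ĉ_i` maximize
`Σ_i (b_i − (b_i − a_i)/(c_i n + 1))` over `{c : Σ c_i = K, c_i > 0}`, provided all `ĉ_i > 0`. -/
theorem uniform_lagrange_maximizer
    {M : ℕ} (hM : 0 < M) (K n : ℕ) (hK : 0 < K) (hn : 0 < n) (hKM : K < M)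
    (a b : Fin M → ℝ) (ha : ∀ i, 0 < a i) (hab : ∀ i, a i < b i)
    (chat : Fin M → ℝ)
    (hchat : ∀ i, chat i =
      Real.sqrt (b i - a i) / ((∑ j, Real.sqrt (b j - a j)) / M) * (K / M + 1 / n) - 1 / n)
    (hpos : ∀ i, 0 < chat i) :
    (∑ i, chat i = K) ∧
    ∀ c : Fin M → ℝ, (∀ i, 0 < c i) → ∑ i, c i = K →
      ∑ i, (b i - (b i - a i) / (c i * n + 1))
        ≤ ∑ i, (b i - (b i - a i) / (chat i * n + 1)) :=
  uniform_lagrange_maximizer_general hM K n hn a b hab chat hchat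
end
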